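/- Fix a positive integer d and v ∈ I(d). Let C be a v-chain, regarded as a (square-free) monomial in ON(v), and let w ∈ I(d). If w ortho-dominates C, then w dominates the monomial C ∪ C^# of N(v). -/

import Mathlib

namespace OG

/-- `star d k = k* = 2d+1-k`. -/
def star (d k : ℕ) : ℕ := 2 * d + 1 - k

/-- `I(d,2d)`: the set of `d`-element subsets of `{1,…,2d}`. -/
def Idn (d : ℕ) : Set (Finset ℕ) :=
  {v | v.card = d ∧ ∀ k ∈ v, 1 ≤ k ∧ k ≤ 2 * d}

/-- The partial order on `I(d,2d)`: entrywise comparison of increasing enumerations. -/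
def leI (x y : Finset ℕ) : Prop :=
  List.Forall₂ (· ≤ ·) (x.sort (· ≤ ·)) (y.sort (· ≤ ·))

/-- `I(d)`: elements of `I(d,2d)` containing exactly one of `k`, `k*` for each `k`,
with evenly many entries exceeding `d`. -/
def Iset (d : ℕ) : Set (Finset ℕ) :=
  {v | v ∈ Idn d ∧ (∀ k, 1 ≤ k → k ≤ 2 * d → (k ∈ v ↔ star d k ∉ v)) ∧
       Even ((v.filter (fun k => d < k)).card)}

/-- membership in `N(v)`. -/
def inN (d : ℕ) (v : Finset ℕ) (p : ℕ × ℕ) : Prop :=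
  1 ≤ p.1 ∧ p.1 ≤ 2 * d ∧ 1 ≤ p.2 ∧ p.2 ≤ 2 * d ∧ p.1 ∉ v ∧ p.2 ∈ v ∧ p.2 < p.1

/-- membership in `OR(v)`. -/
def inOR (d : ℕ) (v : Finset ℕ) (p : ℕ × ℕ) : Prop :=
  1 ≤ p.1 ∧ p.1 ≤ 2 * d ∧ 1 ≤ p.2 ∧ p.2 ≤ 2 * d ∧ p.1 ∉ v ∧ p.2 ∈ v ∧ p.1 < star d p.2

/-- membership in `ON(v) = OR(v) ∩ N(v)`. -/
def inON (d : ℕ) (v : Finset ℕ) (p : ℕ × ℕ) : Prop := inN d v p ∧ inOR d v p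

/-- membership in the diagonal `D(v)`. -/
def inDiag (d : ℕ) (v : Finset ℕ) (p : ℕ × ℕ) : Prop :=
  p.1 ∉ v ∧ p.2 ∈ v ∧ p.1 = star d p.2

instance (d : ℕ) (v : Finset ℕ) : DecidablePred (inN d v) := fun p => by
  unfold inN; infer_instance

instance (d : ℕ) (v : Finset ℕ) : DecidablePred (inOR d v) := fun p => by
  unfold inOR; infer_instance

instance (d : ℕ) (v : Finset ℕ) : DecidablePred (inON d v) := fun p => by
  unfold inON; infer_instance

instance (d : ℕ) (v : Finset ℕ) : DecidablePred (inDiag d v) := fun p => by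
  unfold inDiag; infer_instance

/-- `(R,C) > (r,c)` iff `R > r` and `C < c`. -/
def pgt (A B : ℕ × ℕ) : Prop := B.1 < A.1 ∧ A.2 < B.2

instance : DecidableRel pgt := fun A B => by unfold pgt; infer_instance

/-- `(R,C)` dominates `(r,c)` iff `R ≥ r` and `C ≤ c`. -/
def pdom (A B : ℕ × ℕ) : Prop := B.1 ≤ A.1 ∧ A.2 ≤ B.2

/-- vertical projection `p_v(r,c) = (c*,c)`. -/
def pv (d : ℕ) (α : ℕ × ℕ) : ℕ × ℕ := (star d α.2, α.2)

/-- horizontal projection `p_h(r,c) = (r,r*)`. -/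
def ph (d : ℕ) (α : ℕ × ℕ) : ℕ × ℕ := (α.1, star d α.1)

/-- `(r,c)^# = (c*,r*)`. -/
def hash (d : ℕ) (α : ℕ × ℕ) : ℕ × ℕ := (star d α.2, star d α.1)

/-- A `v`-chain: a strictly decreasing (under `pgt`) list of elements of `ON(v)`. -/
def IsVChain (d : ℕ) (v : Finset ℕ) (C : List (ℕ × ℕ)) : Prop :=
  C.Chain' pgt ∧ ∀ α ∈ C, inON d v α

/-- Two consecutive elements `(r,c) > (R,C)` of a `v`-chain are connected
if `r* ≥ C` and `R > r*`. -/
def Connected (d : ℕ) (α β : ℕ × ℕ) : Prop :=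
  β.2 ≤ star d α.1 ∧ star d α.1 < β.1

instance (d : ℕ) : ∀ α β, Decidable (Connected d α β) := fun α β => by
  unfold Connected; infer_instance

/-- The connected components of a `v`-chain. -/
def components (d : ℕ) (C : List (ℕ × ℕ)) : List (List (ℕ × ℕ)) :=
  C.splitBy (fun a b => decide (Connected d a b))

/-- The three possible types of an element of a `v`-chain. -/
inductive VType | V | H | S
deriving DecidableEq

/-- The type of an element `α` of a `v`-chain `C`: type V if `α` is not the last element
of its connected component or that component has even cardinality; otherwise type H if
`p_h(α) ∈ N(v)` (i.e. `r > r*`) and type S if not. -/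
def typeOf (d : ℕ) (C : List (ℕ × ℕ)) (α : ℕ × ℕ) : VType :=
  match (components d C).find? (fun g => decide (α ∈ g)) with
  | some g =>
      if g.getLast? = some α ∧ Odd g.length then
        (if star d α.1 < α.1 then VType.H else VType.S)
      else VType.V
  | none => VType.V

/-- `𝔖_{C,α}`. -/
def SCa (d : ℕ) (C : List (ℕ × ℕ)) (α : ℕ × ℕ) : Multiset (ℕ × ℕ) :=
  match typeOf d C α with
  | VType.V => {pv d α}
  | VType.H => {pv d α, ph d α}
  | VType.S => {α, hash d α}

/-- `𝔖_C`: the multiset union of the `𝔖_{C,α}` over `α ∈ C`. -/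
def SC (d : ℕ) (C : List (ℕ × ℕ)) : Multiset (ℕ × ℕ) :=
  (C.map (fun α => SCa d C α)).sum

/-- `q_{C,α}`. -/
def qCa (d : ℕ) (C : List (ℕ × ℕ)) (α : ℕ × ℕ) : ℕ × ℕ :=
  match typeOf d C α with
  | VType.S => α
  | _ => pv d α

/-- A strictly decreasing chain of elements of the monomial `S`. -/
def IsChainIn (S : Multiset (ℕ × ℕ)) (L : List (ℕ × ℕ)) : Prop :=
  L.Chain' pgt ∧ ∀ β ∈ L, β ∈ S

/-- The depth of `α` in a monomial `S` of `N(v)`: the maximal length of a strictly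
decreasing chain of elements of `S` ending at `α`. -/
noncomputable def depth (S : Multiset (ℕ × ℕ)) (α : ℕ × ℕ) : ℕ :=
  sSup {k | ∃ L, IsChainIn S L ∧ L.getLast? = some α ∧ L.length = k}

/-- The o-depth of `α` in a `v`-chain `C`: the depth of `q_{C,α}` in `𝔖_C`. -/
noncomputable def odepthC (d : ℕ) (C : List (ℕ × ℕ)) (α : ℕ × ℕ) : ℕ :=
  depth (SC d C) (qCa d C α)

/-- The o-depth of `α` in a monomial `S` of `ON(v)`: the maximum of `odepthC` over
all `v`-chains in `S` containing `α`. -/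
noncomputable def odepthM (d : ℕ) (v : Finset ℕ) (S : Multiset (ℕ × ℕ)) (α : ℕ × ℕ) : ℕ :=
  sSup {k | ∃ C, IsVChain d v C ∧ (∀ β ∈ C, β ∈ S) ∧ α ∈ C ∧ odepthC d C α = k}

/-- A distinguished subset of `N(v)`. -/
def Distinguished (d : ℕ) (v : Finset ℕ) (S : Finset (ℕ × ℕ)) : Prop :=
  (∀ p ∈ S, inN d v p) ∧
  ∀ A ∈ S, ∀ B ∈ S, A ≠ B →
    A.1 ≠ B.1 ∧ A.2 ≠ B.2 ∧ (B.1 < A.1 → (B.1 < A.2 ∨ A.2 < B.2))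

/-- The element of `I(d,2d)` attached to a distinguished subset `S` of `N(v)`:
remove from `v` the column indices of elements of `S` and add their row indices. -/
def toW (v : Finset ℕ) (S : Finset (ℕ × ℕ)) : Finset ℕ :=
  (v \ S.image Prod.snd) ∪ S.image Prod.fst

/-- `w(C) = w_C`, the element of `I(d,2d)` attached to the `v`-chain `C` via the
distinguished subset `𝔖_C`. -/
def wC (d : ℕ) (v : Finset ℕ) (C : List (ℕ × ℕ)) : Finset ℕ :=
  toW v (SC d C).toFinset

/-- `w` ortho-dominates a monomial `S` in `ON(v)`: `w ≥ w(C)` for every `v`-chain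
`C` contained in `S`. -/
def ODominates (d : ℕ) (v w : Finset ℕ) (S : Multiset (ℕ × ℕ)) : Prop :=
  ∀ C : List (ℕ × ℕ), IsVChain d v C → (∀ β ∈ C, β ∈ S) → leI (wC d v C) w

/-- `x` dominates a monomial `S` in `N(v)` (in the sense of the Grassmannian case):
`x ≥ w_L` for every strictly decreasing chain `L` contained in `S`. -/
def Dominates (d : ℕ) (v x : Finset ℕ) (S : Multiset (ℕ × ℕ)) : Prop :=
  ∀ L : List (ℕ × ℕ), L.Chain' pgt → (∀ β ∈ L, β ∈ S) → leI (toW v L.toFinset) x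

/-- The `v`-degree of `θ`: half the cardinality of `v \ θ`. -/
def vdeg (v θ : Finset ℕ) : ℕ := (v \ θ).card / 2

/-- the element next to `α` in the list `C`. -/
def nextInC (C : List (ℕ × ℕ)) (α : ℕ × ℕ) : Option (ℕ × ℕ) :=
  C[C.idxOf α + 1]?

/-- The critical element of a `v`-chain: its first element whose horizontal projection
does not belong to `N(v)` (i.e. with `r ≤ r*`). -/
def critical (d : ℕ) (C : List (ℕ × ℕ)) : Option (ℕ × ℕ) :=
  C.find? (fun x => decide (x.1 ≤ star d x.1))

/-- `α` is the last element of its connected component in `C`. -/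
def isCompLast (d : ℕ) (C : List (ℕ × ℕ)) (α : ℕ × ℕ) : Prop :=
  ∃ g ∈ components d C, g.getLast? = some α

/-- The condition (*): `α` has type H in `C` and `p_h(α) ≯ β'` for some `β' ∈ 𝔖_{C,β}`. -/
def starCond (d : ℕ) (C : List (ℕ × ℕ)) (α β : ℕ × ℕ) : Prop :=
  typeOf d C α = VType.H ∧ ∃ β' ∈ SCa d C β, ¬ pgt (ph d α) β'

/-- A standard monomial in `I(d)`: a weakly decreasing sequence of elements of `I(d)`. -/
def IsStdMon (d : ℕ) (L : List (Finset ℕ)) : Prop :=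
  (∀ θ ∈ L, θ ∈ Iset d) ∧ L.Chain' (fun a b => leI b a)

/-- A standard monomial is `w`-dominated if `w ≥ θ₁`. -/
def WDominated (w : Finset ℕ) (L : List (Finset ℕ)) : Prop :=
  ∀ θ, L.head? = some θ → leI θ w

/-- A standard monomial is `v`-compatible if each member is comparable with `v`
and distinct from `v`. -/
def VCompatible (v : Finset ℕ) (L : List (Finset ℕ)) : Prop :=
  ∀ θ ∈ L, θ ≠ v ∧ (leI θ v ∨ leI v θ)

/-- The degree of a standard monomial: the sum of the `v`-degrees of its members. -/
def stdDeg (v : Finset ℕ) (L : List (Finset ℕ)) : ℕ :=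
  (L.map (fun θ => vdeg v θ)).sum

end OG

/-!
Entrywise comparison of sorted `d`-subsets is a counting condition: `x ≤ y` iff for every
threshold `t`, `x` has at most as many entries `≥ t` as `y`. For `toW v T` this count is the count
for `v` plus the number of entries `(r, c)` of `T` that cross `t`, i.e. with `c < t ≤ r`. Since `w`
ortho-dominates `C` itself, `w ≥ w_C`, and it suffices to inject the crossing entries of a chain
`L` in `C ∪ C^#` into those of `𝔖_C`: an entry `β ∈ {α, α^#}` goes to itself if `α` has type S and
to `p_v(α)` otherwise. This is injective because a chain never contains both `α` and `α^#`, and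
because the sets `𝔖_{C,α}` use pairwise disjoint columns; for the latter, the element following
the last element `(r, c)` of a component is not connected to it, which keeps the column `r*` free.
-/

section SortedCounting

variable {α : Type*} [LinearOrder α]

theorem List.countP_le_countP_of_forall₂ (t : α) {a b : List α} (h : List.Forall₂ (· ≤ ·) a b) :
    a.countP (t ≤ ·) ≤ b.countP (t ≤ ·) := by
  induction h with
  | nil => rfl
  | @cons x y a b hxy _ ih =>
    simp only [List.countP_cons, decide_eq_true_eq]
    by_cases hx : t ≤ x
    · simp [hx, hx.trans hxy, ih]
    · split_ifs <;> omega

theorem List.forall₂_of_countP_le_countP :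
    ∀ {a b : List α}, a.Pairwise (· ≤ ·) → b.Pairwise (· ≤ ·) → a.length = b.length →
      (∀ t, a.countP (t ≤ ·) ≤ b.countP (t ≤ ·)) → List.Forall₂ (· ≤ ·) a b
  | [], [], _, _, _, _ => .nil
  | x :: a, y :: b, ha, hb, hlen, hcount => by
    rw [List.pairwise_cons] at ha hb
    simp only [List.length_cons, Nat.add_right_cancel_iff] at hlen
    have hxy : x ≤ y := by
      by_contra! hyx
      have hall : (x :: a).countP (x ≤ ·) = a.length + 1 := by
        rw [List.countP_cons, List.countP_eq_length.2 fun z hz => by simpa using ha.1 z hz]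
        simp
      have := hcount x
      simp only [hall, List.countP_cons, decide_eq_true_eq, not_le.2 hyx, if_false] at this
      have := List.countP_le_length (p := (x ≤ ·)) (l := b)
      omega
    refine .cons hxy (List.forall₂_of_countP_le_countP ha.2 hb.2 hlen fun t => ?_)
    by_cases hty : t ≤ y
    · rw [(List.countP_eq_length (l := b)).2 fun z hz => by simpa using hty.trans (hb.1 z hz),
        ← hlen]
      exact List.countP_le_length
    · have := hcount t
      simp only [List.countP_cons, decide_eq_true_eq, hty, if_false] at this
      split_ifs at this <;> omega

theorem Finset.countP_sort_eq_card_filter (x : Finset α) (p : α → Prop) [DecidablePred p] :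
    (x.sort (· ≤ ·)).countP (fun z => decide (p z)) = (x.filter p).card := by
  rw [(Finset.sort_perm_toList ..).countP_eq, ← Multiset.coe_countP, Finset.coe_toList,
    Multiset.countP_eq_card_filter]
  rfl

end SortedCounting

theorem List.exists_eq_append_cons_of_getLast?_mem_splitBy {α : Type*} {R : α → α → Bool}
    {l g : List α} {a : α} (hg : g ∈ l.splitBy R) (ha : g.getLast? = some a) :
    ∃ P Q, l = P ++ a :: Q ∧ ∀ b ∈ Q.head?, R a b = false := by
  obtain ⟨G₁, G₂, hG⟩ := List.append_of_mem hg
  have hgne : g ≠ [] := by rintro rfl; simp at ha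
  have hglast : g.dropLast ++ [a] = g := by
    rw [List.getLast?_eq_some_getLast hgne, Option.some_inj] at ha
    rw [← ha, List.dropLast_append_getLast]
  refine ⟨G₁.flatten ++ g.dropLast, G₂.flatten, ?_, ?_⟩
  · conv_lhs => rw [← List.flatten_splitBy R l, hG]
    rw [← hglast]; simp
  · rcases G₂ with _ | ⟨g₂, G₂⟩
    · simp
    have hg₂ne : g₂ ≠ [] := fun h => List.nil_notMem_splitBy R l (by rw [hG, ← h]; simp)
    have hchain := List.isChain_getLast_head_splitBy R l
    rw [hG, List.isChain_append_cons_cons] at hchain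
    obtain ⟨hgne', hg₂ne', hfalse⟩ := hchain.2.1
    intro b hb
    have hb : g₂.head hg₂ne' = b := by
      simpa [List.head?_append_of_ne_nil _ hg₂ne, List.head?_eq_some_head hg₂ne'] using hb
    have ha : g.getLast hgne' = a := by
      simpa [List.getLast?_eq_some_getLast hgne'] using ha
    rwa [← ha, ← hb]

namespace OG

open Finset

theorem card_filter_le_of_leI {x y : Finset ℕ} (h : leI x y) (t : ℕ) :
    #(x.filter (t ≤ ·)) ≤ #(y.filter (t ≤ ·)) := by
  rw [← countP_sort_eq_card_filter, ← countP_sort_eq_card_filter]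
  exact List.countP_le_countP_of_forall₂ t h

theorem card_eq_of_leI {x y : Finset ℕ} (h : leI x y) : #x = #y := by
  simpa using h.length_eq

theorem leI_of_card_filter_le {x y : Finset ℕ} (hcard : #x = #y)
    (h : ∀ t, #(x.filter (t ≤ ·)) ≤ #(y.filter (t ≤ ·))) : leI x y := by
  refine List.forall₂_of_countP_le_countP (Finset.pairwise_sort ..) (Finset.pairwise_sort ..)
    (by simpa using hcard) fun t => ?_
  rw [countP_sort_eq_card_filter x (t ≤ ·), countP_sort_eq_card_filter y (t ≤ ·)]
  exact h t

/-- The properties of a distinguished subset `T` of `N(v)` that make `toW v T` countable entry by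
entry: no index is removed or added twice. -/
structure IsMatching (v : Finset ℕ) (T : Finset (ℕ × ℕ)) : Prop where
  fst_notMem : ∀ p ∈ T, p.1 ∉ v
  snd_mem : ∀ p ∈ T, p.2 ∈ v
  snd_lt_fst : ∀ p ∈ T, p.2 < p.1
  injOn_fst : Set.InjOn Prod.fst (T : Set (ℕ × ℕ))
  injOn_snd : Set.InjOn Prod.snd (T : Set (ℕ × ℕ))

def crossings (T : Finset (ℕ × ℕ)) (t : ℕ) : ℕ := #(T.filter fun p => p.2 < t ∧ t ≤ p.1)

section ToW

variable {v : Finset ℕ} {T : Finset (ℕ × ℕ)}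

theorem card_filter_fst_eq (hlt : ∀ p ∈ T, p.2 < p.1) (t : ℕ) :
    #(T.filter (t ≤ ·.1)) = #(T.filter (t ≤ ·.2)) + crossings T t := by
  rw [crossings, ← card_union_of_disjoint (disjoint_filter.2 fun p _ h h' => by omega),
    ← filter_or]
  congr 1
  exact filter_congr fun p hp => by have := hlt p hp; omega

theorem card_filter_toW (hT : IsMatching v T) (t : ℕ) :
    #((toW v T).filter (t ≤ ·)) = #(v.filter (t ≤ ·)) + crossings T t := by
  have hcols : T.image Prod.snd ⊆ v := image_subset_iff.2 hT.snd_mem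
  have hdisj : Disjoint (v \ T.image Prod.snd) (T.image Prod.fst) :=
    disjoint_of_subset_left sdiff_subset
      (disjoint_right.2 fun _ hk => by
        obtain ⟨p, hp, rfl⟩ := mem_image.1 hk
        exact hT.fst_notMem p hp)
  have hcard_cols : #((T.image Prod.snd).filter (t ≤ ·)) = #(T.filter (t ≤ ·.2)) := by
    rw [filter_image, card_image_of_injOn (hT.injOn_snd.mono (coe_subset.2 (filter_subset _ _)))]
  have hcard_rows : #((T.image Prod.fst).filter (t ≤ ·)) = #(T.filter (t ≤ ·.1)) := by
    rw [filter_image, card_image_of_injOn (hT.injOn_fst.mono (coe_subset.2 (filter_subset _ _)))]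
  have hsdiff : (v \ T.image Prod.snd).filter (t ≤ ·)
      = v.filter (t ≤ ·) \ (T.image Prod.snd).filter (t ≤ ·) := by
    ext; simp only [mem_filter, mem_sdiff]; tauto
  have hle : #((T.image Prod.snd).filter (t ≤ ·)) ≤ #(v.filter (t ≤ ·)) :=
    card_le_card (filter_subset_filter _ hcols)
  rw [toW, filter_union, card_union_of_disjoint (disjoint_filter_filter hdisj), hsdiff,
    card_sdiff_of_subset (filter_subset_filter _ hcols), hcard_rows, hcard_cols,
    card_filter_fst_eq hT.snd_lt_fst]
  omega

theorem card_toW (hT : IsMatching v T) : #(toW v T) = #v := by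
  simpa [crossings] using card_filter_toW hT 0

theorem leI_toW_of_crossings_le {T' : Finset (ℕ × ℕ)} {w : Finset ℕ} (hT : IsMatching v T)
    (hT' : IsMatching v T') (hcross : ∀ t, crossings T t ≤ crossings T' t)
    (hw : leI (toW v T') w) : leI (toW v T) w := by
  refine leI_of_card_filter_le ?_ fun t => ?_
  · rw [card_toW hT, ← card_toW hT', card_eq_of_leI hw]
  · have hw := card_filter_le_of_leI hw t
    rw [card_filter_toW hT'] at hw
    rw [card_filter_toW hT]
    have := hcross t
    omega

end ToW

section Star

variable {d k : ℕ} {v : Finset ℕ}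

theorem star_star (hk : k ≤ 2 * d + 1) : star d (star d k) = k := by
  unfold star; omega

theorem star_notMem_of_mem (hv : v ∈ Iset d) (h1 : 1 ≤ k) (h2 : k ≤ 2 * d) (hk : k ∈ v) :
    star d k ∉ v :=
  (hv.2.1 k h1 h2).1 hk

theorem star_mem_of_notMem (hv : v ∈ Iset d) (h1 : 1 ≤ k) (h2 : k ≤ 2 * d) (hk : k ∉ v) :
    star d k ∈ v := by
  have := hv.2.1 (star d k) (by unfold star; omega) (by unfold star; omega)
  rw [star_star (by omega)] at this
  tauto

theorem inN.hash {α : ℕ × ℕ} (hv : v ∈ Iset d) (h : inN d v α) : inN d v (hash d α) := by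
  obtain ⟨h1, h2, h3, h4, h5, h6, h7⟩ := h
  refine ⟨?_, ?_, ?_, ?_, star_notMem_of_mem hv h3 h4 h6, star_mem_of_notMem hv h1 h2 h5, ?_⟩ <;>
    simp only [OG.hash, star] <;> omega

theorem inN_pv_of_inON {α : ℕ × ℕ} (hv : v ∈ Iset d) (h : inON d v α) : inN d v (pv d α) := by
  obtain ⟨⟨h1, h2, h3, h4, h5, h6, h7⟩, -, -, -, -, -, -, h8⟩ := h
  refine ⟨?_, ?_, h3, h4, star_notMem_of_mem hv h3 h4 h6, h6, ?_⟩ <;>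
    simp only [OG.pv, star] at * <;> omega

end Star

instance : IsTrans (ℕ × ℕ) pgt :=
  ⟨fun _ _ _ h₁ h₂ => ⟨h₂.1.trans h₁.1, h₁.2.trans h₂.2⟩⟩

section Chain

variable {L : List (ℕ × ℕ)}

theorem pgt_or_pgt_of_isChain (h : L.IsChain pgt) {a b : ℕ × ℕ} (ha : a ∈ L) (hb : b ∈ L)
    (hab : a ≠ b) : pgt a b ∨ pgt b a := by
  let R : ℕ × ℕ → ℕ × ℕ → Prop := fun a b => pgt a b ∨ pgt b a
  have : Std.Symm R := ⟨fun _ _ => Or.symm⟩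
  exact ((List.isChain_iff_pairwise.1 h).imp (S := R) Or.inl).forall ha hb hab

theorem fst_ne_and_snd_ne_of_isChain (h : L.IsChain pgt) {a b : ℕ × ℕ} (ha : a ∈ L)
    (hb : b ∈ L) (hab : a ≠ b) : a.1 ≠ b.1 ∧ a.2 ≠ b.2 := by
  rcases pgt_or_pgt_of_isChain h ha hb hab with h | h
  · exact ⟨h.1.ne', h.2.ne⟩
  · exact ⟨h.1.ne, h.2.ne'⟩

theorem injOn_fst_of_isChain (h : L.IsChain pgt) : Set.InjOn Prod.fst {x | x ∈ L} :=
  fun _ ha _ hb hab => by_contra fun hne => (fst_ne_and_snd_ne_of_isChain h ha hb hne).1 hab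

theorem injOn_snd_of_isChain (h : L.IsChain pgt) : Set.InjOn Prod.snd {x | x ∈ L} :=
  fun _ ha _ hb hab => by_contra fun hne => (fst_ne_and_snd_ne_of_isChain h ha hb hne).2 hab

end Chain

theorem snd_ne_star_fst_of_not_connected {d : ℕ} {C P Q : List (ℕ × ℕ)} {α : ℕ × ℕ}
    (hC : C = P ++ α :: Q) (hpw : C.Pairwise pgt) (hlt : ∀ γ ∈ C, γ.2 < γ.1)
    (hα : α.2 < star d α.1) (hQ : ∀ β ∈ Q.head?, ¬ Connected d α β) :
    ∀ γ ∈ C, γ.2 ≠ star d α.1 := by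
  rintro γ hγ heq
  subst hC
  rw [List.pairwise_append, List.pairwise_cons] at hpw
  rcases List.mem_append.1 hγ with hγP | hγαQ
  · have := (hpw.2.2 γ hγP α List.mem_cons_self).2
    omega
  obtain rfl | hγQ := List.mem_cons.1 hγαQ
  · omega
  rcases Q with _ | ⟨β, Q⟩
  · simp at hγQ
  have hβγ : γ.1 ≤ β.1 ∧ β.2 ≤ γ.2 := by
    rcases List.mem_cons.1 hγQ with rfl | hγQ
    · exact ⟨le_rfl, le_rfl⟩
    · have := (List.pairwise_cons.1 hpw.2.1.2).1 γ hγQ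
      exact ⟨this.1.le, this.2.le⟩
  have hγ := hlt γ (by simp [hγQ])
  exact hQ β rfl ⟨by omega, by omega⟩

theorem exists_mem_components_of_typeOf_ne_V {d : ℕ} {C : List (ℕ × ℕ)} {α : ℕ × ℕ}
    (h : typeOf d C α ≠ VType.V) : ∃ g ∈ components d C, g.getLast? = some α := by
  unfold typeOf at h
  split at h
  next g hfind =>
    refine ⟨g, List.mem_of_find?_eq_some hfind, ?_⟩
    by_contra hne
    exact h (if_neg (fun hc => hne hc.1))
  next => exact absurd rfl h

theorem star_fst_lt_fst_of_typeOf_eq_H {d : ℕ} {C : List (ℕ × ℕ)} {α : ℕ × ℕ}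
    (h : typeOf d C α = VType.H) : star d α.1 < α.1 := by
  unfold typeOf at h
  split at h
  · split_ifs at h with _ hlt
    exact hlt
  · cases h

theorem snd_ne_star_fst_of_typeOf_ne_V {d : ℕ} {v : Finset ℕ} {C : List (ℕ × ℕ)}
    (hC : IsVChain d v C) {α : ℕ × ℕ} (h : typeOf d C α ≠ VType.V) :
    ∀ γ ∈ C, γ.2 ≠ star d α.1 := by
  obtain ⟨g, hg, hlast⟩ := exists_mem_components_of_typeOf_ne_V h
  obtain ⟨P, Q, hPQ, hQ⟩ := List.exists_eq_append_cons_of_getLast?_mem_splitBy hg hlast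
  have hαON := hC.2 α (by simp [hPQ])
  refine snd_ne_star_fst_of_not_connected hPQ (List.isChain_iff_pairwise.1 hC.1)
    (fun γ hγ => (hC.2 γ hγ).1.2.2.2.2.2.2) ?_ fun β hβ hcon => by simpa [hcon] using hQ β hβ
  obtain ⟨-, h1, h2, -, -, -, -, h3⟩ := hαON
  unfold star at *
  omega

section SC

variable {d : ℕ} {v : Finset ℕ} {C : List (ℕ × ℕ)} {α β x y : ℕ × ℕ}

theorem mem_SC : x ∈ SC d C ↔ ∃ α ∈ C, x ∈ SCa d C α := by
  rw [SC, ← Multiset.sum_coe, ← Multiset.join, Multiset.mem_join]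
  simp

theorem mem_SCa : x ∈ SCa d C α ↔
    (typeOf d C α ≠ VType.S ∧ x = pv d α) ∨ (typeOf d C α = VType.H ∧ x = ph d α) ∨
      (typeOf d C α = VType.S ∧ (x = α ∨ x = hash d α)) := by
  unfold SCa
  rcases typeOf d C α <;> simp

theorem inN_of_mem_SCa (hv : v ∈ Iset d) (hα : inON d v α) (hx : x ∈ SCa d C α) :
    inN d v x := by
  rcases mem_SCa.1 hx with ⟨-, rfl⟩ | ⟨hH, rfl⟩ | ⟨-, rfl | rfl⟩
  · exact inN_pv_of_inON hv hα
  · obtain ⟨⟨h1, h2, -, -, h5, -, -⟩, -⟩ := hα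
    have := star_fst_lt_fst_of_typeOf_eq_H hH
    refine ⟨h1, h2, ?_, ?_, h5, star_mem_of_notMem hv h1 h2 h5, this⟩ <;>
      simp only [OG.ph, star] <;> omega
  · exact hα.1
  · exact hα.1.hash hv

theorem fst_ne_and_snd_ne_of_mem_SCa (hα : inON d v α) (hx : x ∈ SCa d C α)
    (hy : y ∈ SCa d C α) (hxy : x ≠ y) : x.1 ≠ y.1 ∧ x.2 ≠ y.2 := by
  obtain ⟨⟨-, -, -, -, -, -, h1⟩, -, -, -, h2, -, -, h3⟩ := hα
  rcases mem_SCa.1 hx with ⟨hx, rfl⟩ | ⟨hx, rfl⟩ | ⟨hx, rfl | rfl⟩ <;>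
    rcases mem_SCa.1 hy with ⟨hy, rfl⟩ | ⟨hy, rfl⟩ | ⟨hy, rfl | rfl⟩ <;>
    simp_all [OG.pv, OG.ph, OG.hash, star] <;> omega

/-- The set `{c} ∪ {r* | α has type H or S}` for `α = (r, c)`: it contains the column `x.2` and
the starred row `x.1*` of every `x ∈ 𝔖_{C,α}`. -/
def slots (d : ℕ) (C : List (ℕ × ℕ)) (α : ℕ × ℕ) : Set ℕ :=
  {k | k = α.2 ∨ (typeOf d C α ≠ VType.V ∧ k = star d α.1)}

theorem snd_mem_slots (hx : x ∈ SCa d C α) : x.2 ∈ slots d C α := by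
  rcases mem_SCa.1 hx with ⟨-, rfl⟩ | ⟨hH, rfl⟩ | ⟨hS, rfl | rfl⟩
  · exact Or.inl rfl
  · exact Or.inr ⟨by simp [hH], rfl⟩
  · exact Or.inl rfl
  · exact Or.inr ⟨by simp [hS], rfl⟩

theorem star_fst_mem_slots (hα : inON d v α) (hx : x ∈ SCa d C α) :
    star d x.1 ∈ slots d C α := by
  obtain ⟨⟨-, -, -, h4, -, -, -⟩, -⟩ := hα
  rcases mem_SCa.1 hx with ⟨-, rfl⟩ | ⟨hH, rfl⟩ | ⟨hS, rfl | rfl⟩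
  · exact Or.inl (star_star (by omega))
  · exact Or.inr ⟨by simp [hH], rfl⟩
  · exact Or.inr ⟨by simp [hS], rfl⟩
  · exact Or.inl (star_star (by omega))

theorem eq_of_mem_slots (hC : IsVChain d v C) (hα : α ∈ C) (hβ : β ∈ C) {k : ℕ}
    (hkα : k ∈ slots d C α) (hkβ : k ∈ slots d C β) : α = β := by
  have hαβ := fst_ne_and_snd_ne_of_isChain hC.1 hα hβ
  obtain ⟨⟨-, hα2, -, -, -, -, -⟩, -⟩ := hC.2 α hα
  obtain ⟨⟨-, hβ2, -, -, -, -, -⟩, -⟩ := hC.2 β hβ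
  rcases hkα with rfl | ⟨hαV, rfl⟩ <;> rcases hkβ with hk | ⟨hβV, hk⟩
  · by_contra hne; exact (hαβ hne).2 hk
  · exact absurd hk (snd_ne_star_fst_of_typeOf_ne_V hC hβV α hα)
  · exact absurd hk.symm (snd_ne_star_fst_of_typeOf_ne_V hC hαV β hβ)
  · by_contra hne; exact (hαβ hne).1 (by unfold star at hk; omega)

end SC

section Matching

variable {d : ℕ} {v : Finset ℕ} {C : List (ℕ × ℕ)}

theorem isMatching_of_inN {T : Finset (ℕ × ℕ)} (hT : ∀ p ∈ T, inN d v p)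
    (hfst : Set.InjOn Prod.fst (T : Set (ℕ × ℕ))) (hsnd : Set.InjOn Prod.snd (T : Set (ℕ × ℕ))) :
    IsMatching v T :=
  ⟨fun p hp => (hT p hp).2.2.2.2.1, fun p hp => (hT p hp).2.2.2.2.2.1,
    fun p hp => (hT p hp).2.2.2.2.2.2, hfst, hsnd⟩

theorem isMatching_toFinset_of_isChain {L : List (ℕ × ℕ)} (hL : L.IsChain pgt)
    (hLN : ∀ p ∈ L, inN d v p) : IsMatching v L.toFinset :=
  isMatching_of_inN (fun p hp => hLN p (List.mem_toFinset.1 hp))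
    (by simpa using injOn_fst_of_isChain hL) (by simpa using injOn_snd_of_isChain hL)

theorem isMatching_SC (hv : v ∈ Iset d) (hC : IsVChain d v C) :
    IsMatching v (SC d C).toFinset := by
  have hinj : ∀ x ∈ SC d C, ∀ y ∈ SC d C, (x.2 = y.2 ∨ star d x.1 = star d y.1) → x = y := by
    intro x hx y hy hxy
    obtain ⟨α, hα, hxα⟩ := mem_SC.1 hx
    obtain ⟨β, hβ, hyβ⟩ := mem_SC.1 hy
    obtain rfl : α = β := by
      rcases hxy with h | h
      · exact eq_of_mem_slots hC hα hβ (snd_mem_slots hxα) (h ▸ snd_mem_slots hyβ)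
      · exact eq_of_mem_slots hC hα hβ (star_fst_mem_slots (hC.2 α hα) hxα)
          (h ▸ star_fst_mem_slots (hC.2 β hβ) hyβ)
    by_contra hne
    have := fst_ne_and_snd_ne_of_mem_SCa (hC.2 α hα) hxα hyβ hne
    rcases hxy with h | h
    · exact this.2 h
    · have hx2 := (inN_of_mem_SCa hv (hC.2 α hα) hxα).2.1
      have hy2 := (inN_of_mem_SCa hv (hC.2 α hα) hyβ).2.1
      exact this.1 (by unfold star at h; omega)
  refine isMatching_of_inN (d := d) (fun x hx => ?_) (fun x hx y hy h => ?_) (fun x hx y hy h => ?_)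
  · obtain ⟨α, hα, hxα⟩ := mem_SC.1 (Multiset.mem_toFinset.1 hx)
    exact inN_of_mem_SCa hv (hC.2 α hα) hxα
  · exact hinj x (by simpa using hx) y (by simpa using hy) (Or.inr (congrArg (star d) h))
  · exact hinj x (by simpa using hx) y (by simpa using hy) (Or.inl h)

end Matching

section Crossings

variable {d : ℕ} {v : Finset ℕ} {C L : List (ℕ × ℕ)} {α : ℕ × ℕ}

theorem exists_eq_or_eq_hash_of_mem {β : ℕ × ℕ}
    (hβ : β ∈ (C : Multiset (ℕ × ℕ)) + (C : Multiset (ℕ × ℕ)).map (hash d)) :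
    ∃ α ∈ C, β = α ∨ β = hash d α := by
  rcases Multiset.mem_add.1 hβ with hβ | hβ
  · exact ⟨β, hβ, Or.inl rfl⟩
  · obtain ⟨α, hα, rfl⟩ := Multiset.mem_map.1 hβ
    exact ⟨α, hα, Or.inr rfl⟩

theorem hash_notMem_of_isChain (hL : L.IsChain pgt) (hα : inOR d v α) (hαL : α ∈ L) :
    hash d α ∉ L := by
  intro hL'
  obtain ⟨-, -, -, -, -, -, h⟩ := hα
  have hne : α ≠ hash d α := fun he => by
    have := congrArg Prod.fst he
    simp only [OG.hash] at this
    omega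
  rcases pgt_or_pgt_of_isChain hL hαL hL' hne with h' | h' <;>
    simp only [pgt, OG.hash, star] at h h' <;> omega

theorem crossings_le_crossings_SC (hC : IsVChain d v C) (hL : L.IsChain pgt)
    (hLC : ∀ β ∈ L, β ∈ (C : Multiset (ℕ × ℕ)) + (C : Multiset (ℕ × ℕ)).map (hash d)) (t : ℕ) :
    crossings L.toFinset t ≤ crossings (SC d C).toFinset t := by
  refine card_le_card_of_forall_subsingleton
    (fun β x => ∃ α ∈ C, (β = α ∨ β = hash d α) ∧ x ∈ SCa d C α) (fun β hβ => ?_) ?_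
  · simp only [mem_filter, List.mem_toFinset] at hβ
    obtain ⟨hβL, hβt⟩ := hβ
    obtain ⟨α, hα, hβα⟩ := exists_eq_or_eq_hash_of_mem (hLC β hβL)
    by_cases hS : typeOf d C α = VType.S
    · have hβS : β ∈ SCa d C α := mem_SCa.2 (Or.inr (Or.inr ⟨hS, hβα⟩))
      exact ⟨β, by simpa using ⟨mem_SC.2 ⟨α, hα, hβS⟩, hβt⟩, α, hα, hβα, hβS⟩
    · have hpv : pv d α ∈ SCa d C α := mem_SCa.2 (Or.inl ⟨hS, rfl⟩)
      refine ⟨pv d α, ?_, α, hα, hβα, hpv⟩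
      obtain ⟨⟨-, -, -, -, -, -, h1⟩, -, -, -, -, -, -, h2⟩ := hC.2 α hα
      simp only [mem_filter, Multiset.mem_toFinset, mem_SC]
      refine ⟨⟨α, hα, hpv⟩, ?_⟩
      rcases hβα with rfl | rfl <;> simp only [OG.pv, OG.hash, star] at hβt h2 ⊢ <;> omega
  · rintro x - β₁ ⟨hβ₁, α₁, hα₁, hβα₁, hxα₁⟩ β₂ ⟨hβ₂, α₂, hα₂, hβα₂, hxα₂⟩
    obtain rfl := eq_of_mem_slots hC hα₁ hα₂ (snd_mem_slots hxα₁) (snd_mem_slots hxα₂)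
    have hOR := (hC.2 α₁ hα₁).2
    replace hβ₁ := List.mem_toFinset.1 (mem_filter.1 hβ₁).1
    replace hβ₂ := List.mem_toFinset.1 (mem_filter.1 hβ₂).1
    rcases hβα₁ with rfl | rfl <;> rcases hβα₂ with rfl | rfl
    · rfl
    · exact absurd hβ₂ (hash_notMem_of_isChain hL hOR hβ₁)
    · exact absurd hβ₁ (hash_notMem_of_isChain hL hOR hβ₂)
    · rfl

end Crossings

end OG

open OG in
theorem stmt5_general (d : ℕ) (v : Finset ℕ) (hv : v ∈ Iset d)
    (C : List (ℕ × ℕ)) (hC : IsVChain d v C) (w : Finset ℕ)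
    (hod : ODominates d v w (↑C : Multiset (ℕ × ℕ))) :
    Dominates d v w ((↑C : Multiset (ℕ × ℕ)) + (↑C : Multiset (ℕ × ℕ)).map (hash d)) := by
  intro L hL hLC
  have hLN : ∀ β ∈ L, inN d v β := fun β hβ => by
    obtain ⟨α, hα, hβα | hβα⟩ := exists_eq_or_eq_hash_of_mem (hLC β hβ)
    · exact hβα ▸ (hC.2 α hα).1
    · exact hβα ▸ (hC.2 α hα).1.hash hv
  exact leI_toW_of_crossings_le (isMatching_toFinset_of_isChain hL hLN) (isMatching_SC hv hC)
    (crossings_le_crossings_SC hC hL hLC) (hod C hC fun β hβ => Multiset.mem_coe.2 hβ)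

open OG in
/-- if `w ∈ I(d)` ortho-dominates a `v`-chain `C` (as a monomial), then `w`
dominates the monomial `C ∪ C^#` of `N(v)`. -/
theorem stmt5 (d : ℕ) (hd : 0 < d) (v : Finset ℕ) (hv : v ∈ Iset d)
    (C : List (ℕ × ℕ)) (hC : IsVChain d v C) (w : Finset ℕ) (hw : w ∈ Iset d)
    (hod : ODominates d v w (↑C : Multiset (ℕ × ℕ))) :
    Dominates d v w ((↑C : Multiset (ℕ × ℕ)) + (↑C : Multiset (ℕ × ℕ)).map (hash d)) :=
  stmt5_general d v hv C hC w hod
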